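/- arXiv:1211.5573 — 2 statements merged into one kernel-verified Lean document; each statement's English description precedes it below -/
import Mathlib

section
/- The 1-dimensional Hausdorff content σ of a line segment in ℂ equals half of its length, and σ is not increased under circular projection of a set onto a circle centered at a fixed point (equivalently, onto a ray): if A ⊂ ℂ and A* = {z₀ + |z − z₀| : z ∈ A} is the circular projection of A with center z₀ onto a ray, then σ(A*) ≤ σ(A). -/
open MeasureTheory Filter Metric Set Polynomial
open scoped ENNReal Topology

/-- The logarithmic potential `P(μ;z) = ∫ -log|z-ζ| dμ(ζ)`. -/
noncomputable def pot (μ : Measure ℂ) (z : ℂ) : ℝ := ∫ u, -Real.log (dist z u) ∂μ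

/-- The 1-dimensional Hausdorff content: infimum of sums of radii over countable
coverings by disks. -/
noncomputable def hc (A : Set ℂ) : ℝ≥0∞ :=
  ⨅ (c : ℕ → ℂ) (r : ℕ → ℝ) (_ : A ⊆ ⋃ i, Metric.ball (c i) (r i)),
    ∑' i, ENNReal.ofReal (r i)

/-- Convergence in σ-content to `φ` on compact subsets of `D`. -/
def SigmaConv (φn : ℕ → ℂ → ℂ) (φ : ℂ → ℂ) (D : Set ℂ) : Prop :=
  ∀ K : Set ℂ, K ⊆ D → IsCompact K → ∀ ε : ℝ, 0 < ε →
    Tendsto (fun n => hc {z ∈ K | ε < ‖φn n z - φ z‖}) atTop (𝓝 0)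

/-!
Disk coverings are transported along 1-Lipschitz maps: the image of a disk of radius `r` lies in
a disk of radius `r`. Circular projection is 1-Lipschitz, so it does not increase `σ`.

For a segment `[a, b]`, the closed disk of radius `|a - b| / 2` about the midpoint gives the upper
bound. For the lower bound, the 1-Lipschitz map `z ↦ |z - a|` sends the connected segment onto an
interval containing `[0, |a - b|]`, and it sends a covering by disks of radii `rᵢ` to a covering
by intervals of total length `2 ∑ rᵢ`; comparing Lebesgue measures gives `|a - b| ≤ 2 ∑ rᵢ`.
-/

lemma hc_le {A : Set ℂ} {c : ℕ → ℂ} {r : ℕ → ℝ} (hA : A ⊆ ⋃ i, ball (c i) (r i)) :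
    hc A ≤ ∑' i, ENNReal.ofReal (r i) :=
  iInf_le_of_le c (iInf_le_of_le r (iInf_le_of_le hA le_rfl))

lemma le_hc {A : Set ℂ} {x : ℝ≥0∞}
    (h : ∀ (c : ℕ → ℂ) (r : ℕ → ℝ), A ⊆ ⋃ i, ball (c i) (r i) → x ≤ ∑' i, ENNReal.ofReal (r i)) :
    x ≤ hc A :=
  le_iInf fun c => le_iInf fun r => le_iInf (h c r)

lemma image_subset_iUnion_ball_of_lipschitzWith_one {X : Type*} [PseudoMetricSpace X]
    {f : ℂ → X} (hf : LipschitzWith 1 f) {A : Set ℂ} {c : ℕ → ℂ} {r : ℕ → ℝ}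
    (hA : A ⊆ ⋃ i, ball (c i) (r i)) : f '' A ⊆ ⋃ i, ball (f (c i)) (r i) := by
  rintro _ ⟨z, hz, rfl⟩
  obtain ⟨i, hi⟩ := mem_iUnion.1 (hA hz)
  refine mem_iUnion.2 ⟨i, mem_ball.2 ?_⟩
  calc dist (f z) (f (c i)) ≤ dist z (c i) := by simpa using hf.dist_le_mul z (c i)
    _ < r i := mem_ball.1 hi

lemma hc_image_le_of_lipschitzWith_one {f : ℂ → ℂ} (hf : LipschitzWith 1 f) (A : Set ℂ) :
    hc (f '' A) ≤ hc A :=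
  le_hc fun _ _ hA => hc_le (image_subset_iUnion_ball_of_lipschitzWith_one hf hA)

lemma volume_image_div_two_le_hc {f : ℂ → ℝ} (hf : LipschitzWith 1 f) (A : Set ℂ) :
    volume (f '' A) / 2 ≤ hc A := by
  refine le_hc fun c r hA => ENNReal.div_le_of_le_mul' ?_
  calc volume (f '' A) ≤ ∑' i, volume (ball (f (c i)) (r i)) :=
        (measure_mono (image_subset_iUnion_ball_of_lipschitzWith_one hf hA)).trans
          (measure_iUnion_le _)
    _ = 2 * ∑' i, ENNReal.ofReal (r i) := by
        simp_rw [Real.volume_ball, ENNReal.ofReal_mul zero_le_two, ENNReal.tsum_mul_left]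
        norm_num

lemma hc_le_of_subset_closedBall {A : Set ℂ} {c : ℂ} {r : ℝ} (hA : A ⊆ closedBall c r) :
    hc A ≤ ENNReal.ofReal r := by
  refine ENNReal.le_of_forall_pos_le_add fun ε hε _ => ?_
  have hcov : A ⊆ ⋃ i : ℕ, ball c (if i = 0 then r + ε else 0) :=
    fun z hz => mem_iUnion.2 ⟨0, closedBall_subset_ball (by simpa using hε) (hA hz)⟩
  calc hc A ≤ ∑' i : ℕ, ENNReal.ofReal (if i = 0 then r + ε else 0) := hc_le hcov
    _ = ENNReal.ofReal (r + ε) := by simp [apply_ite ENNReal.ofReal]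
    _ ≤ ENNReal.ofReal r + ε := by
        simpa using ENNReal.ofReal_add_le (p := r) (q := ε)

lemma ofReal_dist_div_two_le_hc {A : Set ℂ} (hA : IsPreconnected A) {a b : ℂ}
    (ha : a ∈ A) (hb : b ∈ A) : ENNReal.ofReal (dist a b / 2) ≤ hc A := by
  have hIcc : Icc 0 (dist a b) ⊆ (dist · a) '' A := by
    simpa [dist_comm b a] using hA.intermediate_value ha hb (f := (dist · a))
      (continuous_id.dist continuous_const).continuousOn
  calc ENNReal.ofReal (dist a b / 2) = volume (Icc 0 (dist a b)) / 2 := by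
        rw [Real.volume_Icc, sub_zero, ENNReal.ofReal_div_of_pos two_pos, ENNReal.ofReal_ofNat]
    _ ≤ volume ((dist · a) '' A) / 2 := by gcongr
    _ ≤ hc A := volume_image_div_two_le_hc (LipschitzWith.dist_left a) A

lemma segment_subset_closedBall_midpoint (a b : ℂ) :
    segment ℝ a b ⊆ closedBall (midpoint ℝ a b) (dist a b / 2) := by
  refine (convex_closedBall _ _).segment_subset ?_ ?_
  · rw [mem_closedBall, dist_left_midpoint, Real.norm_two, inv_mul_eq_div]
  · rw [mem_closedBall, dist_right_midpoint, Real.norm_two, inv_mul_eq_div]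

lemma hc_segment (a b : ℂ) : hc (segment ℝ a b) = ENNReal.ofReal (dist a b / 2) :=
  le_antisymm (hc_le_of_subset_closedBall (segment_subset_closedBall_midpoint a b))
    (ofReal_dist_div_two_le_hc (convex_segment a b).isPreconnected (left_mem_segment ℝ a b)
      (right_mem_segment ℝ a b))

lemma lipschitzWith_circularProjection (z₀ : ℂ) :
    LipschitzWith 1 (fun z : ℂ => z₀ + (dist z z₀ : ℂ)) := by
  have := ((isometry_add_left z₀).comp Complex.isometry_ofReal).lipschitz.comp
    (LipschitzWith.dist_left z₀)
  rwa [one_mul] at this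

/-- The 1-Hausdorff content of a line segment is half its length, and circular
projection `z ↦ z₀ + |z − z₀|` onto a ray does not increase the content. -/
theorem hc_segment_and_circular_projection :
    (∀ a b : ℂ, hc (segment ℝ a b) = ENNReal.ofReal (dist a b / 2)) ∧
    ∀ (z₀ : ℂ) (A : Set ℂ),
      hc ((fun z => z₀ + (dist z z₀ : ℂ)) '' A) ≤ hc A :=
  ⟨hc_segment, fun z₀ => hc_image_le_of_lipschitzWith_one (lipschitzWith_circularProjection z₀)⟩
end

section
/- Let f be analytic on a neighborhood of a compact set Σ with connected complement, let {wₙ} be monic interpolation polynomials with zeros in Σ forming a newtonian table (wₙ divides w_{n+1}), and let Π_{n,m} = P_{n,m}/Q_{n,m} be the multi-point Padé approximants of type (n,m) of f. Then for each n there exists a constant Aₙ ∈ ℂ such that Q_{n,m}(z) P_{n+1,m}(z) − Q_{n+1,m}(z) P_{n,m}(z) = Aₙ w_{n+1}(z), and hence Π_{n+1,m}(z) − Π_{n,m}(z) = Aₙ w_{n+1}(z) / (Q_{n,m}(z) Q_{n+1,m}(z)). -/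
open Filter Metric Set Polynomial
open scoped Topology

/-!
Eliminating `f` between the two Padé conditions, and using `w_{n+2} = w_{n+1} q`, shows that
`D = Qₙ P' − Q' Pₙ` equals `w_{n+1}` times a function continuous near `Σ`. As every zero of
`w_{n+1}` lies in `Σ`, its linear factors can be divided out of `D` one at a time (the quotient
at the removed zero is fixed by continuity), so `w_{n+1} ∣ D`. Finally
`deg D ≤ n + 1 = deg w_{n+1}`, so the quotient is a constant `Aₙ`.
-/

namespace Polynomial

theorem exists_eq_C_mul_of_dvd_of_natDegree_le {K : Type*} [Field K] {w p : K[X]}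
    (hw : w ≠ 0) (hdvd : w ∣ p) (hdeg : p.natDegree ≤ w.natDegree) :
    ∃ A : K, p = C A * w := by
  obtain ⟨E, rfl⟩ := hdvd
  rcases eq_or_ne E 0 with rfl | hE
  · exact ⟨0, by simp⟩
  · have hE0 : E.natDegree = 0 := by rw [natDegree_mul hw hE] at hdeg; omega
    exact ⟨E.coeff 0, by rw [mul_comm, ← eq_C_of_natDegree_eq_zero hE0]⟩

variable {𝕜 : Type*} [NontriviallyNormedField 𝕜]

theorem exists_eq_X_sub_C_mul_of_eval_eq_mul {p : 𝕜[X]} {a : 𝕜} {U : Set 𝕜}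
    {g : 𝕜 → 𝕜} (hU : U ∈ 𝓝 a) (hg : ContinuousAt g a)
    (h : ∀ z ∈ U, p.eval z = (z - a) * g z) :
    ∃ q : 𝕜[X], p = (X - C a) * q ∧ ∀ z ∈ U, q.eval z = g z := by
  have hroot : p.IsRoot a := by simpa using h a (mem_of_mem_nhds hU)
  obtain ⟨q, rfl⟩ := dvd_iff_isRoot.mpr hroot
  have hpunct : ∀ z ∈ U, z ≠ a → q.eval z = g z := fun z hz hza =>
    mul_left_cancel₀ (sub_ne_zero.mpr hza) (by simpa using h z hz)
  have hnear : q.eval =ᶠ[𝓝 a] g := by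
    rw [← q.continuous.continuousAt.eventuallyEq_nhds_iff_eventuallyEq_nhdsNE hg]
    filter_upwards [nhdsWithin_le_nhds hU, self_mem_nhdsWithin] with z hz hza
      using hpunct z hz hza
  refine ⟨q, rfl, fun z hz => ?_⟩
  rcases eq_or_ne z a with rfl | hza
  · exact hnear.eq_of_nhds
  · exact hpunct z hz hza

theorem prod_X_sub_C_dvd_of_eval_eq_mul {U : Set 𝕜} (hU : IsOpen U) {s : Multiset 𝕜}
    (hs : ∀ a ∈ s, a ∈ U) {p : 𝕜[X]} {g : 𝕜 → 𝕜} (hg : ContinuousOn g U)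
    (h : ∀ z ∈ U, p.eval z = (s.map fun a => X - C a).prod.eval z * g z) :
    (s.map fun a => X - C a).prod ∣ p := by
  induction s using Multiset.induction_on generalizing p with
  | empty => simp
  | cons a s ih =>
    have haU : a ∈ U := hs a (Multiset.mem_cons_self a s)
    obtain ⟨q, rfl, hq⟩ := exists_eq_X_sub_C_mul_of_eval_eq_mul
      (g := fun z => (s.map fun a => X - C a).prod.eval z * g z) (hU.mem_nhds haU)
      ((Polynomial.continuous _).continuousAt.mul (hg.continuousAt (hU.mem_nhds haU)))
      (fun z hz => by simpa [mul_assoc] using h z hz)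
    rw [Multiset.map_cons, Multiset.prod_cons]
    exact mul_dvd_mul_left _ (ih (fun b hb => hs b (Multiset.mem_cons_of_mem hb)) hq)

theorem dvd_of_eval_eq_mul [IsAlgClosed 𝕜] {U : Set 𝕜} (hU : IsOpen U) {w p : 𝕜[X]}
    (hw : w ≠ 0) (hroots : ∀ a, w.IsRoot a → a ∈ U) {g : 𝕜 → 𝕜} (hg : ContinuousOn g U)
    (h : ∀ z ∈ U, p.eval z = w.eval z * g z) : w ∣ p := by
  have hfactor :=
    C_leadingCoeff_mul_prod_multiset_X_sub_C (IsAlgClosed.card_roots_eq_natDegree (p := w))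
  rw [← hfactor, (isUnit_C.mpr (leadingCoeff_ne_zero.mpr hw).isUnit).mul_left_dvd]
  refine prod_X_sub_C_dvd_of_eval_eq_mul (g := fun z => w.leadingCoeff * g z) hU
    (fun a ha => hroots a (isRoot_of_mem_roots ha)) (continuousOn_const.mul hg)
    fun z hz => ?_
  have hwz := congrArg (eval z) hfactor
  rw [eval_mul, eval_C] at hwz
  rw [h z hz, ← hwz]
  ring

end Polynomial

theorem pade_newtonian_identity_general (Sg V : Set ℂ) (hV : IsOpen V) (hSV : Sg ⊆ V)
    (f : ℂ → ℂ)
    (n m : ℕ) (hnm : m ≤ n)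
    (w1 w2 : Polynomial ℂ) (hw1 : w1.Monic) (hw1deg : w1.natDegree = n + 1)
    (hroots1 : ∀ z : ℂ, w1.IsRoot z → z ∈ Sg)
    (hdvd : w1 ∣ w2)
    (Pn Qn Pn' Qn' : Polynomial ℂ)
    (hPn : Pn.degree ≤ ((n - m : ℕ) : WithBot ℕ)) (hQn : Qn.degree ≤ (m : WithBot ℕ))
    (hPn' : Pn'.degree ≤ ((n + 1 - m : ℕ) : WithBot ℕ)) (hQn' : Qn'.degree ≤ (m : WithBot ℕ))
    (hpade : ∃ h : ℂ → ℂ, AnalyticOnNhd ℂ h V ∧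
      ∀ z ∈ V, Qn.eval z * f z - Pn.eval z = w1.eval z * h z)
    (hpade' : ∃ h : ℂ → ℂ, AnalyticOnNhd ℂ h V ∧
      ∀ z ∈ V, Qn'.eval z * f z - Pn'.eval z = w2.eval z * h z) :
    ∃ A : ℂ, Qn * Pn' - Qn' * Pn = Polynomial.C A * w1 ∧
      ∀ z : ℂ, Qn.eval z ≠ 0 → Qn'.eval z ≠ 0 →
        Pn'.eval z / Qn'.eval z - Pn.eval z / Qn.eval z =
          A * w1.eval z / (Qn.eval z * Qn'.eval z) := by
  obtain ⟨h, hh, hQnf⟩ := hpade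
  obtain ⟨h', hh', hQnf'⟩ := hpade'
  obtain ⟨q, rfl⟩ := hdvd
  have hcross : ∀ z ∈ V, (Qn * Pn' - Qn' * Pn).eval z =
      w1.eval z * (Qn'.eval z * h z - q.eval z * Qn.eval z * h' z) := fun z hz => by
    simp only [eval_sub, eval_mul] at hQnf' ⊢
    linear_combination Qn'.eval z * hQnf z hz - Qn.eval z * hQnf' z hz
  have hcont : ContinuousOn (fun z => Qn'.eval z * h z - q.eval z * Qn.eval z * h' z) V := by
    have := hh.continuousOn; have := hh'.continuousOn; fun_prop
  have hdeg : (Qn * Pn' - Qn' * Pn).natDegree ≤ w1.natDegree := by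
    rw [← natDegree_le_iff_degree_le] at hPn hQn hPn' hQn'
    refine natDegree_sub_le_of_le (natDegree_mul_le_of_le hQn hPn')
      (natDegree_mul_le_of_le hQn' hPn) |>.trans ?_
    omega
  obtain ⟨A, hA⟩ := exists_eq_C_mul_of_dvd_of_natDegree_le hw1.ne_zero
    (dvd_of_eval_eq_mul hV hw1.ne_zero (fun z hz => hSV (hroots1 z hz)) hcont hcross) hdeg
  refine ⟨A, hA, fun z hz hz' => ?_⟩
  have hAz := congrArg (eval z) hA
  simp only [eval_sub, eval_mul, eval_C] at hAz
  field_simp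
  linear_combination hAz

/-- Formula (3.2)/(3.3): for a newtonian table (`w_{n+1} ∣ w_{n+2}`), consecutive
multipoint Padé approximants `Πₙ = Pₙ/Qₙ` and `Π_{n+1} = P'/Q'` of `f` satisfy
`Qₙ P' − Q' Pₙ = Aₙ w_{n+1}` for some constant `Aₙ`, and hence
`Π_{n+1}(z) − Πₙ(z) = Aₙ w_{n+1}(z)/(Qₙ(z) Q'(z))` off the zeros of the
denominators. -/
theorem pade_newtonian_identity (Sg V : Set ℂ) (hSg : IsCompact Sg)
    (hconn : IsConnected (Sgᶜ : Set ℂ)) (hV : IsOpen V) (hSV : Sg ⊆ V)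
    (f : ℂ → ℂ) (hf : AnalyticOnNhd ℂ f V)
    (n m : ℕ) (hnm : m ≤ n)
    (w1 w2 : Polynomial ℂ) (hw1 : w1.Monic) (hw1deg : w1.natDegree = n + 1)
    (hw2 : w2.Monic) (hw2deg : w2.natDegree = n + 2)
    (hroots1 : ∀ z : ℂ, w1.IsRoot z → z ∈ Sg) (hroots2 : ∀ z : ℂ, w2.IsRoot z → z ∈ Sg)
    (hdvd : w1 ∣ w2)
    (Pn Qn Pn' Qn' : Polynomial ℂ)
    (hPn : Pn.degree ≤ ((n - m : ℕ) : WithBot ℕ)) (hQn : Qn.degree ≤ (m : WithBot ℕ))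
    (hQn0 : Qn ≠ 0)
    (hPn' : Pn'.degree ≤ ((n + 1 - m : ℕ) : WithBot ℕ)) (hQn' : Qn'.degree ≤ (m : WithBot ℕ))
    (hQn'0 : Qn' ≠ 0)
    (hpade : ∃ h : ℂ → ℂ, AnalyticOnNhd ℂ h V ∧
      ∀ z ∈ V, Qn.eval z * f z - Pn.eval z = w1.eval z * h z)
    (hpade' : ∃ h : ℂ → ℂ, AnalyticOnNhd ℂ h V ∧
      ∀ z ∈ V, Qn'.eval z * f z - Pn'.eval z = w2.eval z * h z) :
    ∃ A : ℂ, Qn * Pn' - Qn' * Pn = Polynomial.C A * w1 ∧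
      ∀ z : ℂ, Qn.eval z ≠ 0 → Qn'.eval z ≠ 0 →
        Pn'.eval z / Qn'.eval z - Pn.eval z / Qn.eval z =
          A * w1.eval z / (Qn.eval z * Qn'.eval z) :=
  pade_newtonian_identity_general Sg V hV hSV f n m hnm w1 w2 hw1 hw1deg hroots1 hdvd Pn Qn Pn' Qn'
    hPn hQn hPn' hQn' hpade hpade'
end
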